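/- Let 1 ≤ k < n be integers, let λ = (λ_1,…,λ_n) ∈ Γ_k, and let i ∈ {1,…,n} be an index with λ_i ≥ 0. Write f = S_k(λ). Then f (λ_i + S_1(λ|i) − (k+1) S_k(λ|i)/S_{k−1}(λ|i)) + (k+1)(S_k(λ|i)²/S_{k−1}(λ|i) − S_{k+1}(λ|i)) ≥ S_{k−1}(λ|i) λ_i². (Here S_{k−1}(λ|i) > 0 since λ ∈ Γ_k.) -/

import Mathlib

open Finset

/-- `S_m(λ)`: the `m`-th elementary symmetric polynomial of `λ ∈ ℝⁿ`
(`S_0 = 1`, and `S_m = 0` when `m > n`). -/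
noncomputable def esymmS (n m : ℕ) (lam : Fin n → ℝ) : ℝ :=
  ∑ A ∈ Finset.univ.powersetCard m, ∏ j ∈ A, lam j

/-- `S_m(λ|i)`: `S_m` applied to the vector obtained from `λ` by deleting the `i`-th entry. -/
noncomputable def esymmSdel (n m : ℕ) (lam : Fin n → ℝ) (i : Fin n) : ℝ :=
  ∑ A ∈ (Finset.univ.erase i).powersetCard m, ∏ j ∈ A, lam j

/-- `S_m(λ|ij)`: `S_m` applied to the vector obtained from `λ` by deleting the
`i`-th and `j`-th entries. -/
noncomputable def esymmSdel2 (n m : ℕ) (lam : Fin n → ℝ) (i j : Fin n) : ℝ :=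
  ∑ A ∈ ((Finset.univ.erase i).erase j).powersetCard m, ∏ l ∈ A, lam l

/-- The Gårding cone `Γ_k = {λ : S_m(λ) > 0 for all 1 ≤ m ≤ k}`. -/
def GammaCone (n k : ℕ) : Set (Fin n → ℝ) :=
  {lam | ∀ m, 1 ≤ m → m ≤ k → 0 < esymmS n m lam}

/-- The closure of the Gårding cone: `{λ : S_m(λ) ≥ 0 for all 1 ≤ m ≤ k}`. -/
def GammaConeBar (n k : ℕ) : Set (Fin n → ℝ) :=
  {lam | ∀ m, 1 ≤ m → m ≤ k → 0 ≤ esymmS n m lam}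


namespace KeyClaimAux

variable {ι : Type*} [DecidableEq ι]

noncomputable def E (s : Finset ι) (m : ℕ) (f : ι → ℝ) : ℝ :=
  ∑ A ∈ s.powersetCard m, ∏ j ∈ A, f j

lemma E_zero (s : Finset ι) (f : ι → ℝ) : E s 0 f = 1 := by
  simp [E]

lemma E_one (s : Finset ι) (f : ι → ℝ) : E s 1 f = ∑ j ∈ s, f j := by
  simp [E, Finset.powersetCard_one, Finset.sum_map]

lemma E_of_card_lt {s : Finset ι} {m : ℕ} (h : s.card < m) (f : ι → ℝ) : E s m f = 0 := by
  simp [E, Finset.powersetCard_eq_empty.2 h]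

lemma E_insert {a : ι} {s : Finset ι} (h : a ∉ s) (m : ℕ) (f : ι → ℝ) :
    E (insert a s) (m + 1) f = E s (m + 1) f + f a * E s m f := by
  have hinj : ∀ A ∈ s.powersetCard m, ∀ B ∈ s.powersetCard m,
      insert a A = insert a B → A = B := by
    intro A hA B hB hAB
    rw [Finset.mem_powersetCard] at hA hB
    have ha : a ∉ A := fun hc => h (hA.1 hc)
    have hb : a ∉ B := fun hc => h (hB.1 hc)
    rw [← Finset.erase_insert ha, ← Finset.erase_insert hb, hAB]
  have hdisj : Disjoint (s.powersetCard (m + 1)) ((s.powersetCard m).image (insert a)) := by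
    rw [Finset.disjoint_right]
    intro A hA hA'
    rw [Finset.mem_image] at hA
    obtain ⟨B, hB, rfl⟩ := hA
    rw [Finset.mem_powersetCard] at hA'
    exact h (hA'.1 (Finset.mem_insert_self a B))
  rw [E, Finset.powersetCard_succ_insert h, Finset.sum_union hdisj]
  congr 1
  rw [Finset.sum_image hinj, E, Finset.mul_sum]
  refine Finset.sum_congr rfl fun A hA => ?_
  rw [Finset.mem_powersetCard] at hA
  rw [Finset.prod_insert fun hc => h (hA.1 hc)]

lemma E_erase {j : ι} {s : Finset ι} (h : j ∈ s) (m : ℕ) (f : ι → ℝ) :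
    E s (m + 1) f = E (s.erase j) (m + 1) f + f j * E (s.erase j) m f := by
  conv_lhs => rw [← Finset.insert_erase h]
  exact E_insert (Finset.notMem_erase _ _) m f

lemma E_sum_erase (s : Finset ι) (f : ι → ℝ) (m : ℕ) :
    ∑ j ∈ s, f j * E (s.erase j) m f = ((m : ℝ) + 1) * E s (m + 1) f := by
  induction s using Finset.induction generalizing m with
  | empty => simp [E_of_card_lt (s := (∅ : Finset ι)) (m := m + 1) (by simp) f]
  | @insert a s ha ih =>
    cases m with
    | zero =>
      rw [Finset.sum_insert ha, Finset.erase_insert ha, E_insert ha 0 f, E_one, E_zero]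
      have h0 : ∀ j ∈ s, f j * E ((insert a s).erase j) 0 f = f j := by
        intro j hj; rw [E_zero, mul_one]
      rw [Finset.sum_congr rfl h0]
      push_cast; ring
    | succ m' =>
      have hrw : ∀ j ∈ s, f j * E ((insert a s).erase j) (m' + 1) f
          = f j * E (s.erase j) (m' + 1) f + f a * (f j * E (s.erase j) m' f) := by
        intro j hj
        have hja : a ≠ j := fun hc => ha (hc ▸ hj)
        rw [Finset.erase_insert_of_ne hja,
          E_insert (fun hc => ha (Finset.mem_of_mem_erase hc)) m' f]
        ring
      rw [Finset.sum_insert ha, Finset.erase_insert ha, Finset.sum_congr rfl hrw,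
        Finset.sum_add_distrib, ih, ← Finset.mul_sum, ih, E_insert ha (m' + 1) f]
      push_cast; ring

lemma E_D1 (s : Finset ι) (f : ι → ℝ) (m : ℕ) :
    ∑ j ∈ s, (f j) ^ 2 * E (s.erase j) m f
      = E s 1 f * E s (m + 1) f - ((m : ℝ) + 2) * E s (m + 2) f := by
  have h1 : E s 1 f * E s (m + 1) f = ∑ j ∈ s, f j * E s (m + 1) f := by
    rw [E_one, Finset.sum_mul]
  have h2 : ∀ j ∈ s, f j * E s (m + 1) f
      = (f j) ^ 2 * E (s.erase j) m f + f j * E (s.erase j) (m + 1) f := by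
    intro j hj
    rw [E_erase hj m f]
    ring
  rw [h1, Finset.sum_congr rfl h2, Finset.sum_add_distrib, E_sum_erase s f (m + 1)]
  push_cast
  ring

lemma E_prod (s : Finset ι) (f : ι → ℝ) : E s s.card f = ∏ j ∈ s, f j := by
  simp [E, Finset.powersetCard_self]

lemma E_sq (s : Finset ι) (f : ι → ℝ) :
    (∑ j ∈ s, f j) ^ 2 = (∑ j ∈ s, (f j) ^ 2) + 2 * E s 2 f := by
  induction s using Finset.induction with
  | empty => simp [E_of_card_lt (s := (∅ : Finset ι)) (m := 2) (by simp) f]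
  | @insert a s ha ih =>
    rw [Finset.sum_insert ha, Finset.sum_insert ha, E_insert ha 1 f, E_one]
    nlinarith [ih]

lemma E_inv {s : Finset ι} {f : ι → ℝ} (hf : ∀ j ∈ s, f j ≠ 0) {m : ℕ} (hm : m ≤ s.card) :
    E s (s.card - m) f = (∏ j ∈ s, f j) * E s m (fun j => (f j)⁻¹) := by
  rw [E, E, Finset.mul_sum]
  refine Finset.sum_nbij' (fun A => s \ A) (fun A => s \ A) ?_ ?_ ?_ ?_ ?_
  · intro A hA
    rw [Finset.mem_powersetCard] at hA ⊢
    refine ⟨Finset.sdiff_subset, ?_⟩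
    rw [Finset.card_sdiff_of_subset hA.1, hA.2]
    omega
  · intro A hA
    rw [Finset.mem_powersetCard] at hA ⊢
    refine ⟨Finset.sdiff_subset, ?_⟩
    rw [Finset.card_sdiff_of_subset hA.1, hA.2]
  · intro A hA
    rw [Finset.mem_powersetCard] at hA
    exact Finset.sdiff_sdiff_eq_self hA.1
  · intro A hA
    rw [Finset.mem_powersetCard] at hA
    exact Finset.sdiff_sdiff_eq_self hA.1
  · intro A hA
    rw [Finset.mem_powersetCard] at hA
    have h1 : (∏ j ∈ s \ A, f j) * ∏ j ∈ A, f j = ∏ j ∈ s, f j :=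
      Finset.prod_sdiff hA.1
    have h2 : (∏ j ∈ s \ A, f j) * ∏ j ∈ s \ A, (f j)⁻¹ = 1 := by
      rw [← Finset.prod_mul_distrib]
      refine Finset.prod_eq_one fun j hj => ?_
      exact mul_inv_cancel₀ (hf j (Finset.mem_sdiff.1 hj).1)
    calc ∏ j ∈ A, f j
        = ((∏ j ∈ s \ A, f j) * ∏ j ∈ A, f j) * ∏ j ∈ s \ A, (f j)⁻¹ := by
          rw [mul_comm (∏ j ∈ s \ A, f j) (∏ j ∈ A, f j), mul_assoc, h2, mul_one]
      _ = (∏ j ∈ s, f j) * ∏ j ∈ s \ A, (f j)⁻¹ := by rw [h1]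

lemma E_two_bound (s : Finset ι) (f : ι → ℝ) :
    2 * (s.card : ℝ) * E s 2 f ≤ ((s.card : ℝ) - 1) * (∑ j ∈ s, f j) ^ 2 := by
  have hcs : (∑ j ∈ s, f j) ^ 2 ≤ (s.card : ℝ) * ∑ j ∈ s, (f j) ^ 2 :=
    sq_sum_le_card_mul_sum_sq
  have hsq := E_sq s f
  nlinarith [sq_nonneg (∑ j ∈ s, f j)]

lemma E_newton_top (s : Finset ι) (f : ι → ℝ) (hk2 : 2 ≤ s.card) :
    2 * (s.card : ℝ) * (E s (s.card - 2) f * E s s.card f)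
      ≤ ((s.card : ℝ) - 1) * (E s (s.card - 1) f) ^ 2 := by
  by_cases hf : ∀ j ∈ s, f j ≠ 0
  · have h2 : E s (s.card - 2) f = (∏ j ∈ s, f j) * E s 2 (fun j => (f j)⁻¹) :=
      E_inv hf hk2
    have h1 : E s (s.card - 1) f = (∏ j ∈ s, f j) * E s 1 (fun j => (f j)⁻¹) :=
      E_inv hf (by omega)
    have h0 := E_prod s f
    rw [h2, h1, h0]
    have := E_two_bound s (fun j => (f j)⁻¹)
    rw [← E_one] at this
    nlinarith [sq_nonneg (∏ j ∈ s, f j), sq_nonneg (E s 1 fun j => (f j)⁻¹)]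
  · push_neg at hf
    obtain ⟨j, hj, hfj⟩ := hf
    have h0 : E s s.card f = 0 := by
      rw [E_prod]; exact Finset.prod_eq_zero hj hfj
    rw [h0, mul_zero, mul_zero]
    have : (0 : ℝ) ≤ ((s.card : ℝ) - 1) * (E s (s.card - 1) f) ^ 2 := by
      apply mul_nonneg _ (sq_nonneg _)
      have : (2 : ℝ) ≤ (s.card : ℝ) := by exact_mod_cast hk2
      linarith
    linarith

lemma esymm_eq_E (s : Finset ι) (f : ι → ℝ) (m : ℕ) :
    (s.val.map f).esymm m = E s m f := by
  rw [Finset.esymm_map_val]; rfl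

lemma multiset_newton (ρ : Multiset ℝ) (hk2 : 2 ≤ Multiset.card ρ) :
    2 * (Multiset.card ρ : ℝ) * (ρ.esymm (Multiset.card ρ - 2) * ρ.esymm (Multiset.card ρ))
      ≤ ((Multiset.card ρ : ℝ) - 1) * (ρ.esymm (Multiset.card ρ - 1)) ^ 2 := by
  have hrep : ρ = (Finset.univ : Finset (Fin ρ.toList.length)).val.map ρ.toList.get := by
    rw [Fin.univ_val_map]
    rw [show (List.ofFn ρ.toList.get : Multiset ℝ) = (ρ.toList : Multiset ℝ) by
      rw [List.ofFn_get]]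
    rw [Multiset.coe_toList]
  have hcard : (Finset.univ : Finset (Fin ρ.toList.length)).card = Multiset.card ρ := by
    simp [Multiset.length_toList]
  have he : ∀ m, ρ.esymm m = E (Finset.univ : Finset (Fin ρ.toList.length)) m ρ.toList.get := by
    intro m
    conv_lhs => rw [hrep]
    exact esymm_eq_E _ _ m
  rw [he, he, he]
  have := E_newton_top (Finset.univ : Finset (Fin ρ.toList.length)) ρ.toList.get
    (by rw [hcard]; exact hk2)
  rw [hcard] at this
  exact this

open Polynomial in
lemma E_newton (s : Finset ι) (f : ι → ℝ) (m : ℕ) (hm : m + 2 ≤ s.card) :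
    E s m f * E s (m + 2) f ≤ (E s (m + 1) f) ^ 2 := by
  set N := s.card with hN
  set q : Polynomial ℝ := ((s.val.map f).map fun a => X + C a).prod with hqdef
  have hMcard : Multiset.card (s.val.map f) = N := by
    rw [Multiset.card_map]; rfl
  have hcoeff : ∀ r ≤ N, q.coeff (N - r) = E s r f := by
    intro r hr
    have h := Multiset.prod_X_add_C_coeff (s.val.map f)
      (show N - r ≤ Multiset.card (s.val.map f) by omega)
    rw [hMcard] at h
    rw [hqdef, h, show N - (N - r) = r by omega, esymm_eq_E]
  have hqr : q.roots = (s.val.map f).map (fun a => -a) := by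
    have hq2 : q = (((s.val.map f).map (fun a => -a)).map fun a => X - C a).prod := by
      rw [hqdef, Multiset.map_map, Multiset.map_map, Multiset.map_map]
      apply congrArg
      apply Multiset.map_congr rfl
      intro x _
      simp [sub_neg_eq_add]
    rw [hq2, Polynomial.roots_multiset_prod_X_sub_C]
  have hq_roots_card : Multiset.card q.roots = N := by
    rw [hqr, Multiset.card_map, hMcard]
  have hdeg_le : q.natDegree ≤ N := by
    refine le_trans (Polynomial.natDegree_multiset_prod_le _) ?_
    rw [Multiset.map_map]
    have h1 : ((s.val.map f).map (Polynomial.natDegree ∘ fun a => X + C a))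
        = (s.val.map f).map (fun _ => 1) := by
      apply Multiset.map_congr rfl
      intro x _
      simp [Polynomial.natDegree_X_add_C]
    rw [h1, Multiset.map_const', Multiset.sum_replicate, smul_eq_mul, mul_one, hMcard]
  have hdeg : q.natDegree = N :=
    le_antisymm hdeg_le (hq_roots_card ▸ q.card_roots')
  set j := N - (m + 2) with hj
  set r := Polynomial.derivative^[j] q with hrdef
  have hrc : ∀ t, N - t ≤ Multiset.card (Polynomial.derivative^[t] q).roots := by
    intro t
    induction t with
    | zero => simp [hq_roots_card]
    | succ t ih =>
      have h := Polynomial.card_roots_le_derivative (Polynomial.derivative^[t] q)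
      rw [Function.iterate_succ_apply']
      omega
  have hr_coeff : ∀ i ≤ m + 2, r.coeff (m + 2 - i) = ((N - i).descFactorial j : ℝ) * E s i f := by
    intro i hi
    rw [hrdef, Polynomial.coeff_iterate_derivative]
    have h1 : m + 2 - i + j = N - i := by omega
    rw [h1, hcoeff i (by omega), nsmul_eq_mul]
  have hlead : r.coeff (m + 2) = (N.descFactorial j : ℝ) := by
    have h := hr_coeff 0 (by omega)
    simpa [E_zero] using h
  have hD_pos : 0 < N.descFactorial j :=
    Nat.pos_of_ne_zero fun h => by
      rw [Nat.descFactorial_eq_zero_iff_lt] at h; omega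
  have hr_deg_le : r.natDegree ≤ m + 2 := by
    have h := Polynomial.natDegree_iterate_derivative q j
    rw [← hrdef, hdeg] at h
    omega
  have hr_deg : r.natDegree = m + 2 :=
    le_antisymm hr_deg_le (Polynomial.le_natDegree_of_ne_zero (by
      rw [hlead]
      exact_mod_cast hD_pos.ne'))
  have hr_roots : Multiset.card r.roots = m + 2 := by
    have h1 := hrc j
    rw [← hrdef] at h1
    have h2 := r.card_roots'
    rw [hr_deg] at h2
    omega
  set D := (N.descFactorial j : ℝ) with hD
  have hvieta : ∀ i ≤ m + 2, r.coeff (m + 2 - i) = D * (-1) ^ i * r.roots.esymm i := by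
    intro i hi
    have h := Polynomial.coeff_eq_esymm_roots_of_card
      (by rw [hr_roots, hr_deg] : Multiset.card r.roots = r.natDegree)
      (show m + 2 - i ≤ r.natDegree by omega)
    rw [hr_deg, show m + 2 - (m + 2 - i) = i by omega] at h
    rw [h, Polynomial.leadingCoeff, hr_deg, hlead]
  have heq : ∀ i ≤ m + 2, ((N - i).descFactorial j : ℝ) * E s i f = D * (-1) ^ i * r.roots.esymm i :=
    fun i hi => by rw [← hr_coeff i hi, hvieta i hi]
  have h2 := heq m (by omega)
  have h1 := heq (m + 1) (by omega)
  have h0 := heq (m + 2) le_rfl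
  have hb := multiset_newton r.roots (by omega)
  rw [hr_roots, show m + 2 - 2 = m by omega, show m + 2 - 1 = m + 1 by omega] at hb
  push_cast at hb
  set u := E s (m + 1) f
  set v := E s m f
  set w := E s (m + 2) f
  set C2 := ((N - m).descFactorial j : ℝ) with hC2
  set C1 := ((N - (m + 1)).descFactorial j : ℝ) with hC1
  set C0 := ((N - (m + 2)).descFactorial j : ℝ) with hC0
  have hs2 : (-1 : ℝ) ^ m * (-1 : ℝ) ^ (m + 2) = 1 := by
    rw [← pow_add]
    exact Even.neg_one_pow ⟨m + 1, by ring⟩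
  have hs1 : ((-1 : ℝ) ^ (m + 1)) ^ 2 = 1 := by
    rw [← pow_mul, mul_comm, pow_mul, neg_one_sq, one_pow]
  have hvw : C2 * C0 * (v * w) = D ^ 2 * (r.roots.esymm m * r.roots.esymm (m + 2)) := by
    calc C2 * C0 * (v * w) = (C2 * v) * (C0 * w) := by ring
      _ = (D * (-1) ^ m * r.roots.esymm m) * (D * (-1) ^ (m + 2) * r.roots.esymm (m + 2)) := by rw [h2, h0]
      _ = D ^ 2 * (r.roots.esymm m * r.roots.esymm (m + 2)) * ((-1 : ℝ) ^ m * (-1 : ℝ) ^ (m + 2)) := by ring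
      _ = D ^ 2 * (r.roots.esymm m * r.roots.esymm (m + 2)) := by rw [hs2, mul_one]
  have hu2 : C1 ^ 2 * u ^ 2 = D ^ 2 * (r.roots.esymm (m + 1)) ^ 2 := by
    calc C1 ^ 2 * u ^ 2 = (C1 * u) ^ 2 := by ring
      _ = (D * (-1) ^ (m + 1) * r.roots.esymm (m + 1)) ^ 2 := by rw [h1]
      _ = D ^ 2 * (r.roots.esymm (m + 1)) ^ 2 * ((-1 : ℝ) ^ (m + 1)) ^ 2 := by ring
      _ = D ^ 2 * (r.roots.esymm (m + 1)) ^ 2 := by rw [hs1, mul_one]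
  have hnat : (m + 1) * ((N - (m + 1)).descFactorial j) ^ 2
      ≤ 2 * (m + 2) * ((N - m).descFactorial j * (N - (m + 2)).descFactorial j) := by
    have e1 : N - (m + 1) = j + 1 := by omega
    have e2 : N - m = j + 2 := by omega
    have e0 : N - (m + 2) = j := by omega
    rw [e1, e2, e0]
    have hc2a : (j + 2).choose j = (j + 2).choose 2 := by
      have h := Nat.choose_symm (show 2 ≤ j + 2 by omega)
      rwa [show j + 2 - 2 = j by omega] at h
    have hc2 : 2 * ((j + 2).choose 2) = (j + 2) * (j + 1) := by
      have h : (j + 2) * ((j + 1).choose 1) = (j + 2).choose 2 * 2 :=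
        Nat.add_one_mul_choose_eq (j + 1) 1
      rw [Nat.choose_one_right] at h
      omega
    rw [Nat.descFactorial_eq_factorial_mul_choose (j + 1) j,
      Nat.descFactorial_eq_factorial_mul_choose (j + 2) j,
      Nat.descFactorial_self, Nat.choose_succ_self_right, hc2a]
    calc (m + 1) * (Nat.factorial j * (j + 1)) ^ 2
        = (Nat.factorial j * Nat.factorial j) * ((m + 1) * ((j + 1) * (j + 1))) := by ring
      _ ≤ (Nat.factorial j * Nat.factorial j) * ((m + 2) * ((j + 2) * (j + 1))) := by
          exact Nat.mul_le_mul le_rfl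
            (Nat.mul_le_mul (by omega) (Nat.mul_le_mul (by omega) le_rfl))
      _ = 2 * (m + 2) * (Nat.factorial j * (j + 2).choose 2 * Nat.factorial j) := by
          rw [← hc2]; ring
  have hC2_pos : (0 : ℝ) < C2 := by
    rw [hC2]
    exact_mod_cast Nat.pos_of_ne_zero fun h => by
      rw [Nat.descFactorial_eq_zero_iff_lt] at h; omega
  have hC0_pos : (0 : ℝ) < C0 := by
    rw [hC0]
    exact_mod_cast Nat.pos_of_ne_zero fun h => by
      rw [Nat.descFactorial_eq_zero_iff_lt] at h; omega
  have hnatR : ((m : ℝ) + 1) * C1 ^ 2 ≤ 2 * ((m : ℝ) + 2) * (C2 * C0) := by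
    rw [hC1, hC2, hC0]
    exact_mod_cast hnat
  have step1 : 2 * ((m : ℝ) + 2) * (C2 * C0) * (v * w) ≤ ((m : ℝ) + 1) * (C1 ^ 2 * u ^ 2) := by
    have hmid : D ^ 2 * (2 * ((m : ℝ) + 2) * (r.roots.esymm m * r.roots.esymm (m + 2)))
        ≤ D ^ 2 * (((m : ℝ) + 1) * (r.roots.esymm (m + 1)) ^ 2) := by
      apply mul_le_mul_of_nonneg_left _ (sq_nonneg D)
      calc 2 * ((m : ℝ) + 2) * (r.roots.esymm m * r.roots.esymm (m + 2)) ≤ ((m : ℝ) + 2 - 1) * (r.roots.esymm (m + 1)) ^ 2 := hb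
        _ = ((m : ℝ) + 1) * (r.roots.esymm (m + 1)) ^ 2 := by ring
    calc 2 * ((m : ℝ) + 2) * (C2 * C0) * (v * w)
        = D ^ 2 * (2 * ((m : ℝ) + 2) * (r.roots.esymm m * r.roots.esymm (m + 2))) := by
          linear_combination (2 * ((m : ℝ) + 2)) * hvw
      _ ≤ D ^ 2 * (((m : ℝ) + 1) * (r.roots.esymm (m + 1)) ^ 2) := hmid
      _ = ((m : ℝ) + 1) * (C1 ^ 2 * u ^ 2) := by linear_combination (-((m : ℝ) + 1)) * hu2
  have step2 : ((m : ℝ) + 1) * (C1 ^ 2 * u ^ 2) ≤ 2 * ((m : ℝ) + 2) * (C2 * C0) * u ^ 2 := by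
    have := mul_le_mul_of_nonneg_right hnatR (sq_nonneg u)
    calc ((m : ℝ) + 1) * (C1 ^ 2 * u ^ 2) = ((m : ℝ) + 1) * C1 ^ 2 * u ^ 2 := by ring
      _ ≤ 2 * ((m : ℝ) + 2) * (C2 * C0) * u ^ 2 := this
  have hfac : (0 : ℝ) < 2 * ((m : ℝ) + 2) * (C2 * C0) := by positivity
  have hfin := step1.trans step2
  exact le_of_mul_le_mul_left (by linarith [hfin]) hfac

lemma esymmS_eq (n m : ℕ) (lam : Fin n → ℝ) :
    esymmS n m lam = E Finset.univ m lam := rfl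

lemma esymmSdel_eq (n m : ℕ) (lam : Fin n → ℝ) (i : Fin n) :
    esymmSdel n m lam i = E (Finset.univ.erase i) m lam := rfl

lemma esymm_split (n : ℕ) (lam : Fin n → ℝ) (i : Fin n) (m : ℕ) :
    esymmS n (m + 1) lam
      = E (Finset.univ.erase i) (m + 1) lam + lam i * E (Finset.univ.erase i) m lam := by
  have h : (Finset.univ : Finset (Fin n)) = insert i (Finset.univ.erase i) :=
    (Finset.insert_erase (Finset.mem_univ i)).symm
  rw [esymmS_eq]
  conv_lhs => rw [h]
  rw [E_insert (Finset.notMem_erase i Finset.univ) m lam]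

lemma pos_del : ∀ (k n : ℕ) (lam : Fin n → ℝ), k < n →
    (∀ m, 1 ≤ m → m ≤ k → 0 < esymmS n m lam) →
    ∀ (i : Fin n) (m : ℕ), m < k → 0 < E (Finset.univ.erase i) m lam := by
  intro k
  induction k with
  | zero => intro n lam _ _ i m hm; omega
  | succ k ih =>
    intro n lam hkn hpos i m hm
    have hcard : (Finset.univ.erase i).card = n - 1 := by
      rw [Finset.card_erase_of_mem (Finset.mem_univ i), Finset.card_univ, Fintype.card_fin]
    rcases Nat.lt_or_ge m k with h | h
    · exact ih n lam (by omega) (fun m' h1 h2 => hpos m' h1 (by omega)) i m h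
    · have hmk : m = k := by omega
      subst hmk
      rcases Nat.eq_zero_or_pos m with rfl | hm1
      · rw [E_zero]; norm_num
      obtain ⟨k', rfl⟩ : ∃ k', m = k' + 1 := ⟨m - 1, by omega⟩
      by_contra hcon
      push_neg at hcon
      have hvpos : 0 < E (Finset.univ.erase i) k' lam :=
        ih n lam (by omega) (fun m' h1 h2 => hpos m' h1 (by omega)) i k' (by omega)
      have hS1 : 0 < E (Finset.univ.erase i) (k' + 1) lam
          + lam i * E (Finset.univ.erase i) k' lam := by
        rw [← esymm_split]; exact hpos _ (by omega) (by omega)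
      have hS2 : 0 < E (Finset.univ.erase i) (k' + 2) lam
          + lam i * E (Finset.univ.erase i) (k' + 1) lam := by
        rw [← esymm_split]; exact hpos _ (by omega) (by omega)
      have hai : 0 < lam i := by
        by_contra hle
        push_neg at hle
        nlinarith [mul_nonpos_of_nonpos_of_nonneg hle hvpos.le]
      have p1 : 0 ≤ (E (Finset.univ.erase i) (k' + 1) lam
          + lam i * E (Finset.univ.erase i) k' lam) * (-(E (Finset.univ.erase i) (k' + 1) lam)) :=
        mul_nonneg hS1.le (by linarith)
      have p2 : 0 < (E (Finset.univ.erase i) (k' + 2) lam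
          + lam i * E (Finset.univ.erase i) (k' + 1) lam) * E (Finset.univ.erase i) k' lam :=
        mul_pos hS2 hvpos
      have hnewton := E_newton (Finset.univ.erase i) lam k' (by omega)
      nlinarith [p1, p2, hnewton]

end KeyClaimAux

open KeyClaimAux in
theorem key_claim_nonneg_case' (n k : ℕ) (hk1 : 1 ≤ k) (hkn : k < n)
    (lam : Fin n → ℝ) (hlam : lam ∈ GammaCone n k) (i : Fin n) (hi : 0 ≤ lam i) :
    esymmS n k lam *
        (lam i + esymmSdel n 1 lam i -
          ((k : ℝ) + 1) * esymmSdel n k lam i / esymmSdel n (k - 1) lam i) +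
      ((k : ℝ) + 1) *
        (esymmSdel n k lam i ^ 2 / esymmSdel n (k - 1) lam i - esymmSdel n (k + 1) lam i) ≥
      esymmSdel n (k - 1) lam i * lam i ^ 2 := by
  obtain ⟨K, rfl⟩ : ∃ K, k = K + 1 := ⟨k - 1, by omega⟩
  have hpos : ∀ m, 1 ≤ m → m ≤ K + 1 → 0 < esymmS n m lam := hlam
  simp only [esymmSdel_eq, Nat.add_sub_cancel]
  rcases K with _ | K
  · -- k = 1
    have hsplit := esymm_split n lam i 0
    rw [E_zero, mul_one] at hsplit
    have hsq := E_sq (Finset.univ.erase i) lam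
    rw [← E_one] at hsq
    have hnn : 0 ≤ ∑ j ∈ Finset.univ.erase i, (lam j) ^ 2 :=
      Finset.sum_nonneg fun j _ => sq_nonneg _
    rw [E_zero, div_one, div_one]
    norm_num
    rw [hsplit]
    nlinarith [hsq, hnn]
  · -- k = K + 2
    have hkn' : K + 2 < n := hkn
    have hcard : (Finset.univ.erase i).card = n - 1 := by
      rw [Finset.card_erase_of_mem (Finset.mem_univ i), Finset.card_univ, Fintype.card_fin]
    have hv : 0 < E (Finset.univ.erase i) (K + 1) lam :=
      pos_del (K + 2) n lam hkn' hpos i (K + 1) (by omega)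
    have hvne : E (Finset.univ.erase i) (K + 1) lam ≠ 0 := hv.ne'
    have hIa := E_D1 (Finset.univ.erase i) lam K
    have hIb := E_D1 (Finset.univ.erase i) lam (K + 1)
    have hbr : ∀ j ∈ Finset.univ.erase i, E (Finset.univ.erase j) (K + 1) lam
        = E ((Finset.univ.erase i).erase j) (K + 1) lam
          + lam i * E ((Finset.univ.erase i).erase j) K lam := by
      intro j hj
      have hij : i ≠ j := fun hc => (Finset.mem_erase.1 hj).1 hc.symm
      have hset : Finset.univ.erase j = insert i ((Finset.univ.erase i).erase j) := by
        rw [Finset.erase_right_comm,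
          Finset.insert_erase (Finset.mem_erase.2 ⟨hij, Finset.mem_univ i⟩)]
      rw [hset, E_insert (fun hc => Finset.notMem_erase i Finset.univ
        (Finset.mem_of_mem_erase hc)) K lam]
    have hT : 0 ≤ ∑ j ∈ Finset.univ.erase i,
        (lam j) ^ 2 * E (Finset.univ.erase j) (K + 1) lam :=
      Finset.sum_nonneg fun j hj => mul_nonneg (sq_nonneg _)
        (pos_del (K + 2) n lam hkn' hpos j (K + 1) (by omega)).le
    have hTsplit : ∑ j ∈ Finset.univ.erase i,
          (lam j) ^ 2 * E (Finset.univ.erase j) (K + 1) lam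
        = (∑ j ∈ Finset.univ.erase i,
            (lam j) ^ 2 * E ((Finset.univ.erase i).erase j) (K + 1) lam)
          + lam i * ∑ j ∈ Finset.univ.erase i,
            (lam j) ^ 2 * E ((Finset.univ.erase i).erase j) K lam := by
      rw [Finset.mul_sum, ← Finset.sum_add_distrib]
      refine Finset.sum_congr rfl fun j hj => ?_
      rw [hbr j hj]; ring
    have hsplit1 := esymm_split n lam i (K + 1)
    rw [ge_iff_le, ← sub_nonneg]
    refine le_trans hT (le_of_eq ?_)
    rw [hTsplit, hIa, hIb, hsplit1]
    field_simp
    push_cast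
    ring

/-- the step `E ≥ 0` (case `lam_i ≥ 0`) in the proof of the key claim of the
gradient estimate: for `1 ≤ k < n`, `lam ∈ Γ_k` and an index `i` with `lam_i ≥ 0`, writing
`f = S_k(lam)`, one has
`f(lam_i + S_1(lam|i) − (k+1)S_k(lam|i)/S_{k−1}(lam|i))
  + (k+1)(S_k(lam|i)²/S_{k−1}(lam|i) − S_{k+1}(lam|i)) ≥ S_{k−1}(lam|i)·lam_i²`. -/
theorem key_claim_nonneg_case (n k : ℕ) (hk1 : 1 ≤ k) (hkn : k < n)
    (lam : Fin n → ℝ) (hlam : lam ∈ GammaCone n k) (i : Fin n) (hi : 0 ≤ lam i) :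
    esymmS n k lam *
        (lam i + esymmSdel n 1 lam i -
          ((k : ℝ) + 1) * esymmSdel n k lam i / esymmSdel n (k - 1) lam i) +
      ((k : ℝ) + 1) *
        (esymmSdel n k lam i ^ 2 / esymmSdel n (k - 1) lam i - esymmSdel n (k + 1) lam i) ≥
      esymmSdel n (k - 1) lam i * lam i ^ 2 :=
  key_claim_nonneg_case' n k hk1 hkn lam hlam i hi
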